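/- Let y_F be the linear chain with nearest-neighbor spacing Fε. Then the infimum over all unconstrained displacements u ∈ 𝒰 \ {0} of δ²E^CB(y_F)[u,u]/‖u'‖²_{ℓ²_ε} equals min{ φ''(F) + 4 φ''(2F), (φ'(F) + 2 φ'(2F))/F }. -/

import Mathlib

noncomputable section

open Real Finset

/-- Euclidean norm on `ℝ × ℝ`. -/
def enorm2 (v : ℝ × ℝ) : ℝ := Real.sqrt (v.1 ^ 2 + v.2 ^ 2)

/-- Euclidean dot product on `ℝ × ℝ`. -/
def edot (v w : ℝ × ℝ) : ℝ := v.1 * w.1 + v.2 * w.2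

/-- `N`-periodic mean-zero displacements (the space `𝒰`). -/
def IsDisp (N : ℕ) (u : ℤ → ℝ × ℝ) : Prop :=
  (∀ ℓ : ℤ, u (ℓ + (N : ℤ)) = u ℓ) ∧ ∑ ℓ ∈ Finset.Icc (1 : ℤ) (N : ℤ), u ℓ = 0

/-- Constrained displacements (the space `𝒰̃`): second component vanishes. -/
def IsDisp1D (N : ℕ) (u : ℤ → ℝ × ℝ) : Prop :=
  IsDisp N u ∧ ∀ ℓ : ℤ, (u ℓ).2 = 0

/-- Backward difference `u'_ℓ = (u_ℓ - u_{ℓ-1})/ε`. -/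
def bd (ε : ℝ) (u : ℤ → ℝ × ℝ) (ℓ : ℤ) : ℝ × ℝ := ε⁻¹ • (u ℓ - u (ℓ - 1))

/-- The inner product `⟨v,w⟩ = ε ∑_{ℓ=1}^N v_ℓ · w_ℓ`. -/
def ip (N : ℕ) (ε : ℝ) (v w : ℤ → ℝ × ℝ) : ℝ :=
  ε * ∑ ℓ ∈ Finset.Icc (1 : ℤ) (N : ℤ), edot (v ℓ) (w ℓ)

/-- The norm `‖v‖_{ℓ²_ε}`. -/
def nrm (N : ℕ) (ε : ℝ) (v : ℤ → ℝ × ℝ) : ℝ :=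
  Real.sqrt (ε * ∑ ℓ ∈ Finset.Icc (1 : ℤ) (N : ℤ), (enorm2 (v ℓ)) ^ 2)

/-- The atomistic energy `E^a`. -/
def Ea (N : ℕ) (ε : ℝ) (φ : ℝ → ℝ) (y : ℤ → ℝ × ℝ) : ℝ :=
  ε * ∑ ℓ ∈ Finset.Icc (1 : ℤ) (N : ℤ),
    (φ (enorm2 (bd ε y ℓ)) + φ (enorm2 (bd ε y (ℓ + 1) + bd ε y ℓ)))

/-- The Cauchy–Born energy `E^CB`. -/
def ECB (N : ℕ) (ε : ℝ) (φ : ℝ → ℝ) (y : ℤ → ℝ × ℝ) : ℝ :=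
  ε * ∑ ℓ ∈ Finset.Icc (1 : ℤ) (N : ℤ),
    (φ (enorm2 (bd ε y ℓ)) + φ (2 * enorm2 (bd ε y ℓ)))

/-- The bond-angle energy `E^b`. -/
def Eb (N : ℕ) (ε α : ℝ) (y : ℤ → ℝ × ℝ) : ℝ :=
  ε * ∑ ℓ ∈ Finset.Icc (1 : ℤ) (N : ℤ),
    α * (1 - edot (bd ε y (ℓ + 1)) (bd ε y ℓ) /
      (enorm2 (bd ε y (ℓ + 1)) * enorm2 (bd ε y ℓ)))

/-- The quasi-nonlocal energy `E^QNL`. -/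
def EQNL (N K : ℕ) (ε : ℝ) (φ : ℝ → ℝ) (y : ℤ → ℝ × ℝ) : ℝ :=
  ε * ∑ ℓ ∈ Finset.Icc (1 : ℤ) (N : ℤ), φ (enorm2 (bd ε y ℓ))
  + ε * ∑ ℓ ∈ Finset.Icc (1 : ℤ) (K : ℤ), φ (enorm2 (bd ε y (ℓ + 1) + bd ε y ℓ))
  + ε * ∑ ℓ ∈ Finset.Icc ((K : ℤ) + 2) (N : ℤ), φ (2 * enorm2 (bd ε y ℓ))
  + ε / 2 * φ (2 * enorm2 (bd ε y 1)) + ε / 2 * φ (2 * enorm2 (bd ε y ((K : ℤ) + 1)))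

/-- First variation `δE(y)[u] = (d/dt) E(y + t u) |_{t=0}`. -/
def dE (E : (ℤ → ℝ × ℝ) → ℝ) (y u : ℤ → ℝ × ℝ) : ℝ :=
  deriv (fun t : ℝ => E (fun ℓ => y ℓ + t • u ℓ)) 0

/-- Second variation `δ²E(y)[u,v] = (∂²/∂t∂s) E(y + t u + s v) |_{t=s=0}`. -/
def d2E (E : (ℤ → ℝ × ℝ) → ℝ) (y u v : ℤ → ℝ × ℝ) : ℝ :=
  deriv (fun s : ℝ => deriv (fun t : ℝ => E (fun ℓ => y ℓ + t • u ℓ + s • v ℓ)) 0) 0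

/-- The linear chain `y_{F,ℓ} = (Fεℓ, 0)`. -/
def yLin (ε F : ℝ) : ℤ → ℝ × ℝ := fun ℓ => (F * ε * ℓ, 0)

/-- The uniform circular chain of radius `R = Fε/(2 sin(πε))`. -/
def yCirc (ε F : ℝ) : ℤ → ℝ × ℝ := fun ℓ =>
  (F * ε / (2 * Real.sin (π * ε)) * Real.cos (2 * π * ε * ℓ),
   F * ε / (2 * Real.sin (π * ε)) * Real.sin (2 * π * ε * ℓ))


/-!
Perturbing the linear chain along `u`, every bond of `y_F + x u` is `(F + x a, x b)` with
`(a, b) = u'_ℓ`. Writing `W(r) = φ(r) + φ(2r)` for the Cauchy–Born density, the second derivative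
of `W(|(F + x a, x b)|)` at `x = 0` is `W''(F) a² + (W'(F) / F) b²`: a longitudinal stiffness and a
transversal tension. Hence the Rayleigh quotient `δ²E(y_F)[u,u] / ‖u'‖²` is an average of
`W''(F)` and `W'(F) / F` with weights `Σ a²` and `Σ b²`, so it is at least their minimum, and
purely longitudinal or purely transversal displacements attain each of the two values.
-/

open Filter Topology

section BondLength

/-- `‖(F, 0) + x • (a, b)‖`: the bond length of `y_F + x u` at a site where `u' = (a, b)`. -/
def bondLength (F a b x : ℝ) : ℝ := √((F + x * a) ^ 2 + (x * b) ^ 2)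

variable {F a b : ℝ}

lemma bondLength_zero (hF : 0 < F) : bondLength F a b 0 = F := by
  simp [bondLength, Real.sqrt_sq hF.le]

lemma continuous_bondLength : Continuous (bondLength F a b) := by
  unfold bondLength
  fun_prop

lemma eventually_bondLength_pos (hF : 0 < F) : ∀ᶠ x in 𝓝 0, 0 < bondLength F a b x :=
  continuous_bondLength.continuousAt.eventually
    (eventually_gt_nhds ((bondLength_zero hF).symm ▸ hF))

lemma hasDerivAt_bondLength {x : ℝ} (hx : 0 < bondLength F a b x) :
    HasDerivAt (bondLength F a b) (((F + x * a) * a + x * b ^ 2) / bondLength F a b x) x := by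
  have hq : HasDerivAt (fun x : ℝ => (F + x * a) ^ 2 + (x * b) ^ 2)
      (2 * ((F + x * a) * a + x * b ^ 2)) x := by
    refine ((((hasDerivAt_id x).mul_const a).const_add F).pow 2 |>.fun_add
      (((hasDerivAt_id x).mul_const b).pow 2)).congr_deriv ?_
    simp only [id]
    ring
  have hq0 : (F + x * a) ^ 2 + (x * b) ^ 2 ≠ 0 := fun h => by
    simp [bondLength, h] at hx
  refine ((Real.hasDerivAt_sqrt hq0).comp x hq).congr_deriv ?_
  unfold bondLength
  field_simp

lemma hasDerivAt_bondLength_zero (hF : 0 < F) : HasDerivAt (bondLength F a b) a 0 := by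
  have hF' : 0 < bondLength F a b 0 := (bondLength_zero hF).symm ▸ hF
  refine (hasDerivAt_bondLength hF').congr_deriv ?_
  rw [bondLength_zero hF]
  field_simp
  ring

variable {ψ ψ' : ℝ → ℝ}

lemma eventually_hasDerivAt_comp_bondLength (hF : 0 < F)
    (hψ : ∀ r, 0 < r → HasDerivAt ψ (ψ' r) r) :
    ∀ᶠ x in 𝓝 0, HasDerivAt (fun x => ψ (bondLength F a b x))
      (ψ' (bondLength F a b x) * (((F + x * a) * a + x * b ^ 2) / bondLength F a b x)) x :=
  (eventually_bondLength_pos hF).mono fun _ hx => (hψ _ hx).comp _ (hasDerivAt_bondLength hx)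

lemma hasDerivAt_deriv_comp_bondLength (hF : 0 < F)
    (hψ : ∀ r, 0 < r → HasDerivAt ψ (ψ' r) r) {ψ'' : ℝ} (hψ' : HasDerivAt ψ' ψ'' F) :
    HasDerivAt (deriv fun x => ψ (bondLength F a b x)) (ψ'' * a ^ 2 + ψ' F / F * b ^ 2) 0 := by
  have hm := hasDerivAt_bondLength_zero (a := a) (b := b) hF
  have hm0 := bondLength_zero (a := a) (b := b) hF
  have hslope : HasDerivAt (fun x => ψ' (bondLength F a b x)) (ψ'' * a) 0 :=
    (hm0 ▸ hψ').comp 0 hm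
  have hcos : HasDerivAt (fun x => ((F + x * a) * a + x * b ^ 2) / bondLength F a b x)
      (b ^ 2 / F) 0 := by
    have hn : HasDerivAt (fun x : ℝ => (F + x * a) * a + x * b ^ 2) (a * a + b ^ 2) 0 := by
      simpa using ((((hasDerivAt_id (0 : ℝ)).mul_const a).const_add F).mul_const a).fun_add
        ((hasDerivAt_id (0 : ℝ)).mul_const (b ^ 2))
    refine (hn.div hm (hm0.symm ▸ hF.ne')).congr_deriv ?_
    rw [hm0]
    field_simp
    ring
  have hderiv : deriv (fun x => ψ (bondLength F a b x)) =ᶠ[𝓝 0] fun x =>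
      ψ' (bondLength F a b x) * (((F + x * a) * a + x * b ^ 2) / bondLength F a b x) :=
    (eventually_hasDerivAt_comp_bondLength hF hψ).mono fun _ h => h.deriv
  refine ((hslope.fun_mul hcos).congr_of_eventuallyEq hderiv).congr_deriv ?_
  rw [hm0]
  field_simp
  ring

end BondLength

lemma hasDerivAt_deriv_sum {ι 𝕜 E : Type*} [NontriviallyNormedField 𝕜] [NormedAddCommGroup E]
    [NormedSpace 𝕜 E] (s : Finset ι) {f : ι → 𝕜 → E} {f'' : ι → E} {x : 𝕜}
    (hf : ∀ i ∈ s, ∀ᶠ y in 𝓝 x, DifferentiableAt 𝕜 (f i) y)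
    (hf' : ∀ i ∈ s, HasDerivAt (deriv (f i)) (f'' i) x) :
    HasDerivAt (deriv fun y => ∑ i ∈ s, f i y) (∑ i ∈ s, f'' i) x := by
  have hsum : deriv (fun y => ∑ i ∈ s, f i y) =ᶠ[𝓝 x] fun y => ∑ i ∈ s, deriv (f i) y := by
    filter_upwards [(eventually_all_finset s).2 hf] with y hy
    exact deriv_fun_sum hy
  exact (HasDerivAt.fun_sum hf').congr_of_eventuallyEq hsum

section CauchyBorn

variable {φ : ℝ → ℝ}

def cbDensity (φ : ℝ → ℝ) (r : ℝ) : ℝ := φ r + φ (2 * r)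

lemma ContDiffOn.hasDerivAt_and_hasDerivAt_deriv {s : Set ℝ} (hφ : ContDiffOn ℝ 2 φ s)
    (hs : IsOpen s) {r : ℝ} (hr : r ∈ s) :
    HasDerivAt φ (deriv φ r) r ∧ HasDerivAt (deriv φ) (deriv (deriv φ) r) r := by
  have hφ' : ContDiffOn ℝ 1 (deriv φ) s := hφ.deriv_of_isOpen hs (by norm_num)
  exact ⟨((hφ.contDiffAt (hs.mem_nhds hr)).differentiableAt (by norm_num)).hasDerivAt,
    ((hφ'.contDiffAt (hs.mem_nhds hr)).differentiableAt (by norm_num)).hasDerivAt⟩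

lemma hasDerivAt_cbDensity (hφ : ContDiffOn ℝ 2 φ (Set.Ioi 0)) {r : ℝ} (hr : 0 < r) :
    HasDerivAt (cbDensity φ) (deriv φ r + 2 * deriv φ (2 * r)) r := by
  have h2 := ((hφ.hasDerivAt_and_hasDerivAt_deriv isOpen_Ioi (by positivity : 0 < 2 * r)).1.comp r
    ((hasDerivAt_id r).const_mul 2))
  refine ((hφ.hasDerivAt_and_hasDerivAt_deriv isOpen_Ioi hr).1.fun_add h2).congr_deriv ?_
  ring

lemma hasDerivAt_deriv_cbDensity (hφ : ContDiffOn ℝ 2 φ (Set.Ioi 0)) {r : ℝ} (hr : 0 < r) :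
    HasDerivAt (fun r => deriv φ r + 2 * deriv φ (2 * r))
      (deriv (deriv φ) r + 4 * deriv (deriv φ) (2 * r)) r := by
  have h2 := ((hφ.hasDerivAt_and_hasDerivAt_deriv isOpen_Ioi (by positivity : 0 < 2 * r)).2.comp r
    ((hasDerivAt_id r).const_mul 2)).const_mul 2
  refine ((hφ.hasDerivAt_and_hasDerivAt_deriv isOpen_Ioi hr).2.fun_add h2).congr_deriv ?_
  ring

lemma d2E_diag (E : (ℤ → ℝ × ℝ) → ℝ) (y u : ℤ → ℝ × ℝ) :
    d2E E y u u = deriv (deriv fun x : ℝ => E (fun ℓ => y ℓ + x • u ℓ)) 0 := by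
  have h : ∀ s t : ℝ, (fun ℓ => y ℓ + t • u ℓ + s • u ℓ) = fun ℓ => y ℓ + (t + s) • u ℓ := by
    intro s t
    funext ℓ
    rw [add_smul, add_assoc]
  simp only [d2E, h, deriv_comp_add_const (f := fun x : ℝ => E (fun ℓ => y ℓ + x • u ℓ)),
    zero_add]

variable {N : ℕ} {ε F : ℝ}

lemma bd_yLin_add_smul (hε : ε ≠ 0) (u : ℤ → ℝ × ℝ) (x : ℝ) (ℓ : ℤ) :
    bd ε (fun j => yLin ε F j + x • u j) ℓ = (F + x * (bd ε u ℓ).1, x * (bd ε u ℓ).2) := by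
  simp only [bd, yLin, Prod.ext_iff, Prod.smul_fst, Prod.smul_snd, Prod.fst_add, Prod.snd_add,
    Prod.fst_sub, Prod.snd_sub, smul_eq_mul]
  push_cast
  constructor <;> field_simp <;> ring

lemma ECB_yLin_add_smul (hε : ε ≠ 0) (u : ℤ → ℝ × ℝ) (x : ℝ) :
    ECB N ε φ (fun j => yLin ε F j + x • u j) =
      ε * ∑ ℓ ∈ Finset.Icc (1 : ℤ) N, cbDensity φ (bondLength F (bd ε u ℓ).1 (bd ε u ℓ).2 x) := by
  simp only [ECB, bd_yLin_add_smul hε]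
  rfl

lemma d2E_ECB_yLin (hε : ε ≠ 0) (hφ : ContDiffOn ℝ 2 φ (Set.Ioi 0)) (hF : 0 < F)
    (u : ℤ → ℝ × ℝ) :
    d2E (ECB N ε φ) (yLin ε F) u u =
      ε * ∑ ℓ ∈ Finset.Icc (1 : ℤ) N,
        ((deriv (deriv φ) F + 4 * deriv (deriv φ) (2 * F)) * (bd ε u ℓ).1 ^ 2 +
          (deriv φ F + 2 * deriv φ (2 * F)) / F * (bd ε u ℓ).2 ^ 2) := by
  have hψ : ∀ r, 0 < r → HasDerivAt (cbDensity φ) (deriv φ r + 2 * deriv φ (2 * r)) r :=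
    fun r hr => hasDerivAt_cbDensity hφ hr
  rw [d2E_diag]
  simp only [ECB_yLin_add_smul hε, deriv_const_mul_field']
  congr 1
  refine (hasDerivAt_deriv_sum _ (fun ℓ _ => ?_) (fun ℓ _ => ?_)).deriv
  · exact (eventually_hasDerivAt_comp_bondLength hF hψ).mono fun _ h => h.differentiableAt
  · exact hasDerivAt_deriv_comp_bondLength hF hψ (hasDerivAt_deriv_cbDensity hφ hF)

end CauchyBorn

section Displacements

variable {N : ℕ} {ε : ℝ} {u : ℤ → ℝ × ℝ}

lemma sum_Icc_sub_sub_one {M : Type*} [AddCommGroup M] (f : ℤ → M) (n : ℕ) :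
    ∑ ℓ ∈ Finset.Icc (1 : ℤ) n, (f ℓ - f (ℓ - 1)) = f n - f 0 := by
  induction n with
  | zero => simp
  | succ n ih =>
    rw [Nat.cast_succ, ← Finset.insert_Icc_right_eq_Icc_add_one (by omega),
      Finset.sum_insert (by simp), ih, add_sub_cancel_right]
    abel

lemma IsDisp.eq_zero_of_forall_eq_sub_one (hN : 0 < N) (hu : IsDisp N u)
    (h : ∀ ℓ ∈ Finset.Icc (1 : ℤ) N, u ℓ = u (ℓ - 1)) : u = 0 := by
  obtain ⟨hper, hsum⟩ := hu
  have hjump : Function.Periodic (fun ℓ => u ℓ - u (ℓ - 1)) (N : ℤ) := fun ℓ => by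
    simp only [show ℓ + N - 1 = ℓ - 1 + N by ring, hper]
  have hconst : Function.Periodic u 1 := fun ℓ => by
    obtain ⟨k, hk, hjk⟩ := hjump.exists_mem_Ico (by exact_mod_cast hN) (ℓ + 1) 1
    have hk' : k ∈ Finset.Icc (1 : ℤ) N := by
      rw [Set.mem_Ico] at hk
      rw [Finset.mem_Icc]
      omega
    simpa [h k hk', sub_eq_zero] using hjk
  have hval : ∀ ℓ, u ℓ = u 0 := fun ℓ => by simpa using hconst.int_mul_eq ℓ
  have hu0 : u 0 = 0 := by
    rw [Finset.sum_congr rfl fun ℓ _ => hval ℓ, Finset.sum_const, smul_eq_zero] at hsum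
    exact hsum.resolve_left (by simp; omega)
  funext ℓ
  rw [hval, hu0]
  rfl

lemma IsDisp.sum_bd_sq_pos (hN : 0 < N) (hε : ε ≠ 0) (hu : IsDisp N u) (hu0 : u ≠ 0) :
    0 < ∑ ℓ ∈ Finset.Icc (1 : ℤ) N, ((bd ε u ℓ).1 ^ 2 + (bd ε u ℓ).2 ^ 2) := by
  refine lt_of_le_of_ne (Finset.sum_nonneg fun _ _ => by positivity) fun h => hu0 ?_
  refine hu.eq_zero_of_forall_eq_sub_one hN fun ℓ hℓ => ?_
  have hsq := (Finset.sum_eq_zero_iff_of_nonneg (fun _ _ => by positivity)).1 h.symm ℓ hℓ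
  obtain ⟨h1, h2⟩ := (add_eq_zero_iff_of_nonneg (sq_nonneg _) (sq_nonneg _)).1 hsq
  have hbd : bd ε u ℓ = 0 := Prod.ext (pow_eq_zero_iff two_ne_zero |>.1 h1)
    (pow_eq_zero_iff two_ne_zero |>.1 h2)
  simpa [bd, hε, sub_eq_zero] using hbd

lemma nrm_sq (hε : 0 ≤ ε) (v : ℤ → ℝ × ℝ) :
    nrm N ε v ^ 2 = ε * ∑ ℓ ∈ Finset.Icc (1 : ℤ) N, ((v ℓ).1 ^ 2 + (v ℓ).2 ^ 2) := by
  have hsq : ∀ w : ℝ × ℝ, enorm2 w ^ 2 = w.1 ^ 2 + w.2 ^ 2 := fun w =>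
    Real.sq_sqrt (by positivity)
  rw [nrm, Real.sq_sqrt (mul_nonneg hε (Finset.sum_nonneg fun _ _ => sq_nonneg _))]
  simp only [hsq]

/-- `v` on `N ℤ` and `-v` on `N ℤ + 1`, written as a difference of `N`-periodic sequences. -/
def pulse (N : ℕ) (v : ℝ × ℝ) (ℓ : ℤ) : ℝ × ℝ :=
  ((if (N : ℤ) ∣ ℓ then 1 else 0) - (if (N : ℤ) ∣ ℓ - 1 then 1 else 0) : ℝ) • v

lemma isDisp_pulse (N : ℕ) (v : ℝ × ℝ) : IsDisp N (pulse N v) := by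
  refine ⟨fun ℓ => ?_, ?_⟩
  · simp only [pulse, show ℓ + N - 1 = ℓ - 1 + N by ring, dvd_add_self_right]
  · have := sum_Icc_sub_sub_one (fun ℓ : ℤ => if (N : ℤ) ∣ ℓ then (1 : ℝ) else 0) N
    simp only [pulse, ← Finset.sum_smul, this]
    simp

lemma pulse_ne_zero (hN : 2 ≤ N) {v : ℝ × ℝ} (hv : v ≠ 0) : pulse N v ≠ 0 := by
  intro h
  have hN1 : ¬ (N : ℤ) ∣ 1 := fun h1 => by
    have := Int.eq_one_of_dvd_one (by positivity) h1
    omega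
  simpa [pulse, hN1, hv] using congrFun h 0

end Displacements

lemma min_le_sum_div_sum {ι : Type*} (s : Finset ι) (A B : ℝ) (a b : ι → ℝ)
    (h : 0 < ∑ i ∈ s, (a i ^ 2 + b i ^ 2)) :
    min A B ≤ (∑ i ∈ s, (A * a i ^ 2 + B * b i ^ 2)) / ∑ i ∈ s, (a i ^ 2 + b i ^ 2) := by
  rw [le_div_iff₀ h, Finset.mul_sum]
  exact Finset.sum_le_sum fun i _ => by
    nlinarith [min_le_left A B, min_le_right A B, sq_nonneg (a i), sq_nonneg (b i)]

lemma d2E_ECB_yLin_div_nrm_sq {N : ℕ} {ε F : ℝ} {φ : ℝ → ℝ} (hε : 0 < ε)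
    (hφ : ContDiffOn ℝ 2 φ (Set.Ioi 0)) (hF : 0 < F) (u : ℤ → ℝ × ℝ) :
    d2E (ECB N ε φ) (yLin ε F) u u / nrm N ε (bd ε u) ^ 2 =
      (∑ ℓ ∈ Finset.Icc (1 : ℤ) N,
        ((deriv (deriv φ) F + 4 * deriv (deriv φ) (2 * F)) * (bd ε u ℓ).1 ^ 2 +
          (deriv φ F + 2 * deriv φ (2 * F)) / F * (bd ε u ℓ).2 ^ 2)) /
        ∑ ℓ ∈ Finset.Icc (1 : ℤ) N, ((bd ε u ℓ).1 ^ 2 + (bd ε u ℓ).2 ^ 2) := by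
  rw [d2E_ECB_yLin hε.ne' hφ hF, nrm_sq hε.le, mul_div_mul_left _ _ hε.ne']

lemma d2E_ECB_yLin_div_nrm_sq_eq {N : ℕ} {ε F : ℝ} {φ : ℝ → ℝ} (hN : 0 < N) (hε : 0 < ε)
    (hφ : ContDiffOn ℝ 2 φ (Set.Ioi 0)) (hF : 0 < F) {u : ℤ → ℝ × ℝ} (hu : IsDisp N u)
    (hu0 : u ≠ 0) {c : ℝ}
    (hc : ∀ ℓ, (deriv (deriv φ) F + 4 * deriv (deriv φ) (2 * F)) * (bd ε u ℓ).1 ^ 2 +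
      (deriv φ F + 2 * deriv φ (2 * F)) / F * (bd ε u ℓ).2 ^ 2 =
        c * ((bd ε u ℓ).1 ^ 2 + (bd ε u ℓ).2 ^ 2)) :
    d2E (ECB N ε φ) (yLin ε F) u u / nrm N ε (bd ε u) ^ 2 = c := by
  rw [d2E_ECB_yLin_div_nrm_sq hε hφ hF, Finset.sum_congr rfl fun ℓ _ => hc ℓ, ← Finset.mul_sum,
    mul_div_cancel_right₀ _ (hu.sum_bd_sq_pos hN hε.ne' hu0).ne']

theorem stmt_2 (N : ℕ) (hN : 4 ≤ N) (ε : ℝ) (hε : ε = (N : ℝ)⁻¹)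
    (φ : ℝ → ℝ) (hφ : ContDiffOn ℝ 2 φ (Set.Ioi 0)) (F : ℝ) (hF : 0 < F) :
    IsGLB {r : ℝ | ∃ u : ℤ → ℝ × ℝ, IsDisp N u ∧ u ≠ 0 ∧
        r = d2E (ECB N ε φ) (yLin ε F) u u / (nrm N ε (bd ε u)) ^ 2}
      (min (deriv (deriv φ) F + 4 * deriv (deriv φ) (2 * F))
        ((deriv φ F + 2 * deriv φ (2 * F)) / F)) := by
  have hN0 : 0 < N := by omega
  have hε0 : 0 < ε := hε ▸ by positivity
  set A := deriv (deriv φ) F + 4 * deriv (deriv φ) (2 * F)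
  set B := (deriv φ F + 2 * deriv φ (2 * F)) / F
  have hpulse : ∀ v : ℝ × ℝ, v ≠ 0 → pulse N v ≠ 0 := fun _ => pulse_ne_zero (by omega)
  refine IsLeast.isGLB ⟨?_, ?_⟩
  · rcases le_total A B with hAB | hAB
    · rw [min_eq_left hAB]
      refine ⟨pulse N (1, 0), isDisp_pulse N _, hpulse _ (by simp), ?_⟩
      refine (d2E_ECB_yLin_div_nrm_sq_eq hN0 hε0 hφ hF (isDisp_pulse N _)
        (hpulse _ (by simp)) fun ℓ => ?_).symm
      simp [bd, pulse, A]
    · rw [min_eq_right hAB]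
      refine ⟨pulse N (0, 1), isDisp_pulse N _, hpulse _ (by simp), ?_⟩
      refine (d2E_ECB_yLin_div_nrm_sq_eq hN0 hε0 hφ hF (isDisp_pulse N _)
        (hpulse _ (by simp)) fun ℓ => ?_).symm
      simp [bd, pulse, B]
  · rintro r ⟨u, hu, hu0, rfl⟩
    rw [d2E_ECB_yLin_div_nrm_sq hε0 hφ hF]
    exact min_le_sum_div_sum _ A B _ _ (hu.sum_bd_sq_pos hN0 hε0.ne' hu0)
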